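/- arXiv:0811.4197 — 9 statements merged into one kernel-verified Lean document; each statement's English description precedes it below -/
import Mathlib

section
/- Let d > 0 and let A, B, C, D be points of the Euclidean plane with dist(A, B) = d, dist(A, D) = d, dist(A, C) = d·√2, and ∠BCD = π/2. Then ABCD is a square of side d; in particular dist(B, C) = d, dist(C, D) = d, dist(B, D) = d·√2, and ∠ABC = ∠ADC = π/2. -/
noncomputable section

open EuclideanGeometry Real
open scoped RealInnerProductSpace

/-- The Euclidean plane. -/
abbrev Plane : Type := EuclideanSpace ℝ (Fin 2)

/-- Four measurements determine a square: if `|AB| = |AD| = d`, `|AC| = d√2` and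
`∠BCD = π/2`, then `ABCD` is a square of side `d`. -/
theorem square_four_measurements (d : ℝ) (hd : 0 < d) (A B C D : Plane)
    (hAB : dist A B = d) (hAD : dist A D = d) (hAC : dist A C = d * Real.sqrt 2)
    (hBCD : ∠ B C D = π / 2) :
    dist B C = d ∧ dist C D = d ∧ dist B D = d * Real.sqrt 2 ∧
      ∠ A B C = π / 2 ∧ ∠ A D C = π / 2 := by
  have h2 : (Real.sqrt 2) ^ 2 = 2 := Real.sq_sqrt (by norm_num)
  have hd2 : (0:ℝ) ≤ d * Real.sqrt 2 := by positivity
  set x := B - A with hxdef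
  set y := D - A with hydef
  set z := C - A with hzdef
  have hnx : ‖x‖ = d := by rw [hxdef, ← dist_eq_norm, dist_comm]; exact hAB
  have hny : ‖y‖ = d := by rw [hydef, ← dist_eq_norm, dist_comm]; exact hAD
  have hnz : ‖z‖ = d * Real.sqrt 2 := by rw [hzdef, ← dist_eq_norm, dist_comm]; exact hAC
  have hxx : ⟪x, x⟫ = d ^ 2 := by rw [real_inner_self_eq_norm_sq, hnx]
  have hyy : ⟪y, y⟫ = d ^ 2 := by rw [real_inner_self_eq_norm_sq, hny]
  have hzz : ⟪z, z⟫ = 2 * d ^ 2 := by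
    rw [real_inner_self_eq_norm_sq, hnz, mul_pow, h2]; ring
  have horth : ⟪x - z, y - z⟫ = 0 := by
    have h1 : x - z = B - C := by rw [hxdef, hzdef]; abel
    have h3 : y - z = D - C := by rw [hydef, hzdef]; abel
    rw [h1, h3]
    have := (InnerProductGeometry.inner_eq_zero_iff_angle_eq_pi_div_two
      (B - C) (D - C)).2
    apply this
    rw [← hBCD]
    simp [EuclideanGeometry.angle, vsub_eq_sub]
  have hexp : ⟪x, y⟫ - ⟪x, z⟫ - ⟪z, y⟫ + ⟪z, z⟫ = 0 := by
    have := horth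
    simp only [inner_sub_left, inner_sub_right] at this
    linarith [real_inner_comm z y, this]
  have hkey : z = x + y := by
    have h0 : ‖z - (x + y)‖ ^ 2 = 0 := by
      rw [← real_inner_self_eq_norm_sq]
      simp only [inner_sub_left, inner_sub_right, inner_add_left, inner_add_right]
      have c1 := real_inner_comm x z
      have c2 := real_inner_comm y z
      have c3 := real_inner_comm x y
      linarith
    have := pow_eq_zero_iff (n := 2) (by norm_num) |>.1 h0
    rwa [norm_eq_zero, sub_eq_zero] at this
  have hxy0 : ⟪x, y⟫ = 0 := by
    have : ⟪z, z⟫ = ⟪x + y, x + y⟫ := by rw [hkey]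
    simp only [inner_add_left, inner_add_right] at this
    have c3 := real_inner_comm x y
    linarith
  have hBC : B - C = -y := by
    have h1 : B - C = x - z := by rw [hxdef, hzdef]; abel
    rw [h1, hkey]; abel
  have hCD : C - D = x := by
    have h1 : C - D = z - y := by rw [hydef, hzdef]; abel
    rw [h1, hkey]; abel
  have hABx : A - B = -x := by rw [hxdef]; abel
  have hADy : A - D = -y := by rw [hydef]; abel
  have hCB : C - B = y := by rw [← neg_sub, hBC, neg_neg]
  refine ⟨?_, ?_, ?_, ?_, ?_⟩
  · rw [dist_eq_norm, hBC, norm_neg, hny]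
  · rw [dist_eq_norm, hCD, hnx]
  · have hBD : B - D = x - y := by rw [hxdef, hydef]; abel
    have hsq : ‖B - D‖ ^ 2 = (d * Real.sqrt 2) ^ 2 := by
      rw [hBD, ← real_inner_self_eq_norm_sq]
      simp only [inner_sub_left, inner_sub_right]
      have c3 := real_inner_comm x y
      have hr : (d * Real.sqrt 2) ^ 2 = 2 * d ^ 2 := by rw [mul_pow, h2]; ring
      linarith
    rw [dist_eq_norm]
    exact (sq_eq_sq₀ (norm_nonneg _) hd2).1 hsq
  · have h0 : ⟪A - B, C - B⟫ = 0 := by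
      rw [hABx, hCB, inner_neg_left, hxy0, neg_zero]
    have hang := (InnerProductGeometry.inner_eq_zero_iff_angle_eq_pi_div_two
      (A - B) (C - B)).1 h0
    rw [← hang]
    simp [EuclideanGeometry.angle, vsub_eq_sub]
  · have h0 : ⟪A - D, C - D⟫ = 0 := by
      rw [hADy, hCD, inner_neg_left, real_inner_comm, hxy0, neg_zero]
    have hang := (InnerProductGeometry.inner_eq_zero_iff_angle_eq_pi_div_two
      (A - D) (C - D)).1 h0
    rw [← hang]
    simp [EuclideanGeometry.angle, vsub_eq_sub]
end
end

section
/- Let A, B, C, D be points of the Euclidean plane such that ∠ABC = π/2, ∠ADC = π/2, and B and D lie strictly on opposite sides of the line through A and C. Let A', B', C', D' be points of the plane with dist(A', B') = dist(A, B), dist(A', D') = dist(A, D), dist(A', C') = dist(A, C), ∠B'C'D' = ∠BCD, and such that B' and D' lie strictly on opposite sides of the line through A' and C'. Then the two quadrilaterals are congruent: there is an isometric equivalence φ : ℝ² ≃ᵢ ℝ² with φ(A) = A', φ(B) = B', φ(C) = C', φ(D) = D'. -/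
/-!
Write `α = ∠B'C'A'`. The law of cosines in `A'B'C'` and Pythagoras in `ABC` give
`2 |AC| |B'C'| cos α = |BC|² + |B'C'|² ≥ 2 |BC| |B'C'| = 2 |AC| |B'C'| cos ∠BCA`, so
`∠B'C'A' ≤ ∠BCA`, with equality only if `|B'C'| = |BC|`; likewise `∠D'C'A' ≤ ∠DCA`.
As `B` and `D` lie on opposite sides of `AC` and both angles at `C` are acute,
`∠BCD = ∠BCA + ∠ACD`, whereas `∠B'C'D' ≤ ∠B'C'A' + ∠A'C'D'` by the triangle inequality for
angles. Since `∠B'C'D' = ∠BCD`, all of these are equalities; hence `|B'C'| = |BC|`,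
`|D'C'| = |DC|` and, by SAS, `|B'D'| = |BD|`. A congruence of point families spanning the
plane extends to an isometry.
-/

noncomputable section

open EuclideanGeometry Real

open Module RealInnerProductSpace
open scoped Congruent

theorem Real.Angle.abs_toReal_add_eq_or_of_sign_eq {θ ψ : Real.Angle} (hs : θ.sign = ψ.sign)
    (h0 : θ.sign ≠ 0) :
    |(θ + ψ).toReal| = |θ.toReal| + |ψ.toReal| ∨
      |(θ + ψ).toReal| = 2 * π - (|θ.toReal| + |ψ.toReal|) := by
  by_cases hsa : θ.sign = (θ + ψ).sign
  · left
    have hθ : θ ≠ π := (sign_ne_zero_iff.1 h0).2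
    have hψ : ψ ≠ π := (sign_ne_zero_iff.1 (hs ▸ h0)).2
    rw [toReal_add_eq_toReal_add_toReal hθ hψ (.inr hsa), abs_add_eq_add_abs_iff]
    grind [toReal_neg_iff_sign_neg, toReal_nonneg_iff_sign_nonneg]
  · exact .inr (abs_toReal_add_eq_two_pi_sub_abs_toReal_add_abs_toReal hs hsa)

theorem affineSpan_eq_top_of_notMem_affineSpan_pair {k V P : Type*} [DivisionRing k]
    [AddCommGroup V] [Module k V] [AddTorsor V P] [FiniteDimensional k V] (hV : finrank k V = 2)
    {A B C : P} (hAC : A ≠ C) (hB : B ∉ line[k, A, C]) :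
    affineSpan k (Set.range ![A, B, C]) = ⊤ :=
  (affineIndependent_of_ne_of_mem_of_notMem_of_mem hAC (left_mem_affineSpan_pair k A C) hB
    (right_mem_affineSpan_pair k A C)).affineSpan_eq_top_iff_card_eq_finrank_add_one.2
    (by simp [hV])

theorem congruent_fin_four_of_dist_eq {P₁ P₂ : Type*} [PseudoMetricSpace P₁]
    [PseudoMetricSpace P₂] {a b c d : P₁} {a' b' c' d' : P₂} (hab : dist a b = dist a' b')
    (hac : dist a c = dist a' c') (had : dist a d = dist a' d') (hbc : dist b c = dist b' c')
    (hbd : dist b d = dist b' d') (hcd : dist c d = dist c' d') :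
    ![a, b, c, d] ≅ ![a', b', c', d'] := by
  rw [congruent_iff_dist_eq]
  intro i j
  fin_cases i <;> fin_cases j <;> simp <;> grind [dist_comm]

section Euclidean

variable {V P : Type*} [NormedAddCommGroup V] [InnerProductSpace ℝ V] [MetricSpace P]
  [NormedAddTorsor V P]

theorem LinearIsometryEquiv.exists_apply_eq_of_inner_eq {ι : Type*} [Fintype ι]
    [FiniteDimensional ℝ V] {u v : ι → V}
    (hu : Submodule.span ℝ (Set.range u) = ⊤) (h : ∀ i j, ⟪u i, u j⟫ = ⟪v i, v j⟫) :
    ∃ f : V ≃ₗᵢ[ℝ] V, ∀ i, f (u i) = v i := by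
  classical
  set Lu := Fintype.linearCombination ℝ u
  set Lv := Fintype.linearCombination ℝ v
  have hnorm : ∀ c, ‖Lv c‖ = ‖Lu c‖ := fun c => by
    simp only [Lu, Lv, Fintype.linearCombination_apply, norm_eq_sqrt_real_inner, sum_inner,
      inner_sum, real_inner_smul_left, real_inner_smul_right, h]
  obtain ⟨g, hg⟩ := Lu.exists_rightInverse_of_surjective (by
    rw [Fintype.range_linearCombination, hu])
  have hLug : ∀ x, Lu (g x) = x := fun x => LinearMap.congr_fun hg x
  -- `Lv ∘ g` does not depend on the choice of `g`, because `ker Lu ≤ ker Lv` by `hnorm`.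
  let f : V →ₗᵢ[ℝ] V :=
    ⟨Lv ∘ₗ g, fun x => by rw [LinearMap.comp_apply, hnorm, hLug]⟩
  refine ⟨f.toLinearIsometryEquiv rfl, fun i => ?_⟩
  have hker : Lv (g (u i) - Pi.single i 1) = 0 := by
    rw [← norm_eq_zero, hnorm, Lu.map_sub, hLug, Fintype.linearCombination_apply_single, one_smul,
      sub_self, norm_zero]
  rw [Lv.map_sub, sub_eq_zero, Fintype.linearCombination_apply_single, one_smul] at hker
  exact hker

theorem inner_vsub_vsub_right_eq_dist (a b c : P) :
    ⟪a -ᵥ c, b -ᵥ c⟫ =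
      (dist a c * dist a c + dist b c * dist b c - dist a b * dist a b) / 2 := by
  rw [real_inner_eq_norm_mul_self_add_norm_mul_self_sub_norm_sub_mul_self_div_two,
    vsub_sub_vsub_cancel_right, dist_eq_norm_vsub V, dist_eq_norm_vsub V, dist_eq_norm_vsub V]

theorem Congruent.exists_affineIsometryEquiv {ι : Type*} [Fintype ι] [FiniteDimensional ℝ V]
    {p p' : ι → P}
    (h : p ≅ p') (hp : affineSpan ℝ (Set.range p) = ⊤) :
    ∃ φ : P ≃ᵃⁱ[ℝ] P, ∀ i, φ (p i) = p' i := by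
  obtain ⟨i₀⟩ : Nonempty ι := by
    by_contra hι
    rw [not_nonempty_iff] at hι
    simp [Set.range_eq_empty] at hp
  have hspan : Submodule.span ℝ (Set.range fun i => p i -ᵥ p i₀) = ⊤ := by
    change Submodule.span ℝ (Set.range ((· -ᵥ p i₀) ∘ p)) = ⊤
    rw [Set.range_comp, ← vectorSpan_eq_span_vsub_set_right ℝ (Set.mem_range_self i₀),
      ← direction_affineSpan, hp, AffineSubspace.direction_top]
  obtain ⟨f, hf⟩ := LinearIsometryEquiv.exists_apply_eq_of_inner_eq hspan
    (v := fun i => p' i -ᵥ p' i₀) fun i j => by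
      simp only [inner_vsub_vsub_right_eq_dist, h.dist_eq]
  refine ⟨AffineIsometryEquiv.mk' (fun x => f (x -ᵥ p i₀) +ᵥ p' i₀) f (p i₀)
    (fun x => by simp), fun i => ?_⟩
  simp [hf]

theorem EuclideanGeometry.angle_eq_angle_add_angle_or_of_sOppSide [Fact (finrank ℝ V = 2)]
    {A B C D : P} (hAC : A ≠ C) (hs : line[ℝ, A, C].SOppSide B D) :
    ∠ B C D = ∠ B C A + ∠ A C D ∨ ∠ B C D = 2 * π - (∠ B C A + ∠ A C D) := by
  have : FiniteDimensional ℝ V := .of_fact_finrank_eq_two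
  have : Module.Oriented ℝ V (Fin 2) := ⟨(finBasisOfFinrankEq ℝ V Fact.out).orientation⟩
  have hA : A ∈ line[ℝ, A, C] := left_mem_affineSpan_pair ℝ A C
  have hC : C ∈ line[ℝ, A, C] := right_mem_affineSpan_pair ℝ A C
  have hBC : B ≠ C := fun h => hs.left_notMem (h ▸ hC)
  have hDC : D ≠ C := fun h => hs.right_notMem (h ▸ hC)
  have hsign : (∡ B C A).sign = (∡ A C D).sign := by
    rw [oangle_rotate_sign A B C, ← oangle_rotate_sign A C D, oangle_rev A D C,
      Real.Angle.sign_neg, hs.oangle_sign_eq_neg hA hC, neg_neg]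
  have h0 : (∡ B C A).sign ≠ 0 := fun h => hs.left_notMem <|
    (oangle_sign_eq_zero_iff_collinear.1 h).mem_affineSpan_of_mem_of_ne (by simp) (by simp)
      (by simp) hAC
  rw [angle_eq_abs_oangle_toReal hBC hAC, angle_eq_abs_oangle_toReal hAC hDC,
    angle_eq_abs_oangle_toReal hBC hDC, ← oangle_add hBC hAC hDC]
  exact Real.Angle.abs_toReal_add_eq_or_of_sign_eq hsign h0

theorem EuclideanGeometry.angle_le_angle_of_angle_eq_pi_div_two {A B C A' B' C' : P}
    (hB : ∠ A B C = π / 2) (hBC : B ≠ C) (hAB : dist A' B' = dist A B)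
    (hAC : dist A' C' = dist A C) :
    ∠ B' C' A' ≤ ∠ B C A ∧ (∠ B' C' A' = ∠ B C A → dist B' C' = dist B C) := by
  have hCB : 0 < dist C B := dist_pos.2 hBC.symm
  have hpyth := (dist_sq_eq_dist_sq_add_dist_sq_iff_angle_eq_pi_div_two A B C).2 hB
  have hlaw := law_cos A' C' B'
  rw [hAB, hAC, angle_comm, dist_comm B' C'] at hlaw
  have hcos : 2 * dist A C * dist C' B' * cos (∠ B' C' A') =
      dist C B * dist C B + dist C' B' * dist C' B' := by linarith
  have hCB' : 0 < dist C' B' := by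
    refine dist_nonneg.lt_of_ne fun h => ?_
    rw [← h] at hcos
    nlinarith
  have hle : dist C B ≤ dist A C * cos (∠ B' C' A') := by
    nlinarith [sq_nonneg (dist C B - dist C' B')]
  have hcos₀ : cos (∠ B C A) * dist A C = dist C B :=
    cos_angle_mul_dist_of_angle_eq_pi_div_two hB
  have hAC₀ : 0 < dist A C := by
    refine dist_nonneg.lt_of_ne fun h => ?_
    rw [← h] at hle
    linarith
  constructor
  · rw [← Real.strictAntiOn_cos.le_iff_ge ⟨angle_nonneg _ _ _, angle_le_pi _ _ _⟩
      ⟨angle_nonneg _ _ _, angle_le_pi _ _ _⟩]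
    nlinarith
  · intro h
    rw [h] at hcos
    rw [dist_comm B', dist_comm B]
    nlinarith [sq_nonneg (dist C B - dist C' B')]

end Euclidean

theorem exceptional_quadrilateral_general (A B C D A' B' C' D' : Plane)
    (hB : ∠ A B C = π / 2) (hD : ∠ A D C = π / 2)
    (hside : (affineSpan ℝ ({A, C} : Set Plane)).SOppSide B D)
    (h1 : dist A' B' = dist A B) (h2 : dist A' D' = dist A D)
    (h3 : dist A' C' = dist A C)
    (h4 : ∠ B' C' D' = ∠ B C D) :
    ∃ φ : Plane ≃ᵢ Plane, φ A = A' ∧ φ B = B' ∧ φ C = C' ∧ φ D = D' := by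
  have : Fact (finrank ℝ Plane = 2) := ⟨finrank_euclideanSpace_fin⟩
  have hA : A ∈ line[ℝ, A, C] := left_mem_affineSpan_pair ℝ A C
  have hC : C ∈ line[ℝ, A, C] := right_mem_affineSpan_pair ℝ A C
  have hBA : B ≠ A := fun h => hside.left_notMem (h ▸ hA)
  have hBC : B ≠ C := fun h => hside.left_notMem (h ▸ hC)
  have hDC : D ≠ C := fun h => hside.right_notMem (h ▸ hC)
  have hAC : A ≠ C := by
    rintro rfl
    rw [angle_self_of_ne hBA.symm] at hB
    linarith [pi_pos]
  have hBCD : ∠ B C D = ∠ B C A + ∠ A C D :=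
    (angle_eq_angle_add_angle_or_of_sOppSide hAC hside).resolve_right fun h => by
      linarith [angle_le_pi B C D, angle_comm A C D,
        angle_lt_pi_div_two_of_angle_eq_pi_div_two hB hBC.symm,
        angle_lt_pi_div_two_of_angle_eq_pi_div_two hD hDC.symm]
  obtain ⟨hBle, hBeq⟩ := angle_le_angle_of_angle_eq_pi_div_two hB hBC h1 h3
  obtain ⟨hDle, hDeq⟩ := angle_le_angle_of_angle_eq_pi_div_two hD hDC h2 h3
  have htri := angle_le_angle_add_angle C' B' A' D'
  have hCB := hBeq (by linarith [angle_comm A C D, angle_comm A' C' D'])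
  have hCD := hDeq (by linarith [angle_comm A C D, angle_comm A' C' D'])
  have hCD' : dist C D = dist C' D' := by rw [dist_comm C, dist_comm C', hCD]
  have hBD := (side_angle_side h4.symm hCB.symm hCD').dist_eq 0 2
  have hcong := congruent_fin_four_of_dist_eq h1.symm h3.symm h2.symm hCB.symm
    (by simpa using hBD) hCD'
  have hspan : affineSpan ℝ (Set.range ![A, B, C, D]) = ⊤ :=
    top_unique ((affineSpan_eq_top_of_notMem_affineSpan_pair finrank_euclideanSpace_fin hAC
      hside.left_notMem).ge.trans (affineSpan_mono ℝ (by simp)))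
  obtain ⟨φ, hφ⟩ := hcong.exists_affineIsometryEquiv hspan
  exact ⟨φ.toIsometryEquiv, hφ 0, hφ 1, hφ 2, hφ 3⟩

/-- A convex quadrilateral `ABCD` with right angles at `B` and `D` is determined up to
congruence by the four measurements `|AB|`, `|AD|`, `|AC|` and `∠BCD`. -/
theorem exceptional_quadrilateral (A B C D A' B' C' D' : Plane)
    (hB : ∠ A B C = π / 2) (hD : ∠ A D C = π / 2)
    (hside : (affineSpan ℝ ({A, C} : Set Plane)).SOppSide B D)
    (h1 : dist A' B' = dist A B) (h2 : dist A' D' = dist A D)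
    (h3 : dist A' C' = dist A C)
    (h4 : ∠ B' C' D' = ∠ B C D)
    (hside' : (affineSpan ℝ ({A', C'} : Set Plane)).SOppSide B' D') :
    ∃ φ : Plane ≃ᵢ Plane, φ A = A' ∧ φ B = B' ∧ φ C = C' ∧ φ D = D' :=
  exceptional_quadrilateral_general A B C D A' B' C' D' hB hD hside h1 h2 h3 h4
end
end

section
/- Let B ≠ D be points of the Euclidean plane and let θ₁, θ₂ be angles with 0 < θ₁ < π/2 and 0 < θ₂ < π/2. Let A and C be points lying strictly on opposite sides of the line through B and D, with ∠DAB = θ₁ and ∠DCB = θ₂. Then dist(A, C) ≤ (dist(B, D)/2) · (cot(θ₁/2) + cot(θ₂/2)), with equality if and only if dist(A, B) = dist(A, D) and dist(C, B) = dist(C, D). In particular, among all such quadrilaterals with given dist(B, D), θ₁ and θ₂, the distance dist(A, C) is maximized by a unique configuration up to congruence, and that configuration satisfies |AB| = |AD| and |CB| = |CD|. -/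
/-!
Let `M` be the midpoint of `BD`, `θ = ∠DAB` and `T = (BD/2)·cot(θ/2)`. The law of cosines and
Apollonius' theorem give `4 (1 - cos θ) (T² - AM²) = 2 cos θ (AB - AD)²`, so for an acute
`θ` we get `AM ≤ T`, with equality exactly when `AB = AD`. Hence `AC ≤ AM + MC` is at most the
bound. When both apexes are isosceles they lie on the perpendicular bisector of `BD`, which
meets the line `BD` only at `M`; as `A` and `C` are on opposite sides, the segment `AC` passes
through `M` and the bound is attained.

In a maximizing quadrilateral the legs are fixed by the base `BD` and the apex angles. In the
plane a point is determined by its distances to `B` and `D` up to reflection in `BD`, and the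
opposite-side condition rules out reflecting just one of `A`, `C`.
-/

noncomputable section

open EuclideanGeometry Real

lemma Real.one_sub_cos_mul_cos_half_div_sin_half_sq {x : ℝ} (hx : sin (x / 2) ≠ 0) :
    (1 - cos x) * (cos (x / 2) / sin (x / 2)) ^ 2 = 1 + cos x := by
  have hcos : cos x = cos (x / 2) ^ 2 - sin (x / 2) ^ 2 := by
    rw [← cos_two_mul', mul_div_cancel₀ x two_ne_zero]
  have h1 : 1 - cos x = 2 * sin (x / 2) ^ 2 := by
    linear_combination -hcos - sin_sq_add_cos_sq (x / 2)
  have h2 : 1 + cos x = 2 * cos (x / 2) ^ 2 := by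
    linear_combination hcos - sin_sq_add_cos_sq (x / 2)
  rw [h1, h2, div_pow]
  field_simp

namespace EuclideanGeometry

variable {V P : Type*} [NormedAddCommGroup V] [InnerProductSpace ℝ V] [MetricSpace P]
  [NormedAddTorsor V P]

lemma four_mul_one_sub_cos_angle_mul_dist_midpoint_sq (A B D : P) :
    4 * (1 - cos (∠ D A B)) * dist A (midpoint ℝ B D) ^ 2 =
      (1 + cos (∠ D A B)) * dist B D ^ 2 - 2 * cos (∠ D A B) * (dist A B - dist A D) ^ 2 := by
  have hcos := law_cos D A B
  have hmed := dist_sq_add_dist_sq_eq_two_mul_dist_midpoint_sq_add_half_dist_sq A B D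
  rw [dist_comm D B, dist_comm D A, dist_comm B A] at hcos
  linear_combination (-2 * (1 - cos (∠ D A B))) * hmed - 2 * hcos

lemma dist_midpoint_le_and_eq_iff_of_angle_lt_pi_div_two {A B D : P} (h0 : 0 < ∠ D A B)
    (h1 : ∠ D A B < π / 2) :
    dist A (midpoint ℝ B D) ≤ dist B D / 2 * (cos (∠ D A B / 2) / sin (∠ D A B / 2)) ∧
    (dist A (midpoint ℝ B D) = dist B D / 2 * (cos (∠ D A B / 2) / sin (∠ D A B / 2)) ↔
      dist A B = dist A D) := by
  set θ := ∠ D A B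
  set m := dist A (midpoint ℝ B D)
  set T := dist B D / 2 * (cos (θ / 2) / sin (θ / 2))
  have hcos : 0 < cos θ := cos_pos_of_mem_Ioo ⟨by linarith [pi_pos], h1⟩
  have hcos1 : 0 < 1 - cos θ := by
    have := cos_lt_cos_of_nonneg_of_le_pi le_rfl (by linarith [pi_pos]) h0
    rw [cos_zero] at this
    linarith
  have hsin : 0 < sin (θ / 2) := sin_pos_of_pos_of_lt_pi (by linarith) (by linarith [pi_pos])
  have hT : 0 ≤ T := by
    have : 0 < cos (θ / 2) := cos_pos_of_mem_Ioo ⟨by linarith [pi_pos], by linarith [pi_pos]⟩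
    positivity
  have hkey : 4 * (1 - cos θ) * (T ^ 2 - m ^ 2) = 2 * cos θ * (dist A B - dist A D) ^ 2 := by
    linear_combination dist B D ^ 2 * one_sub_cos_mul_cos_half_div_sin_half_sq hsin.ne' -
      four_mul_one_sub_cos_angle_mul_dist_midpoint_sq A B D
  constructor
  · refine (pow_le_pow_iff_left₀ dist_nonneg hT two_ne_zero).1 ?_
    nlinarith [sq_nonneg (dist A B - dist A D)]
  · calc m = T ↔ 4 * (1 - cos θ) * (T ^ 2 - m ^ 2) = 0 := by
          rw [mul_eq_zero_iff_left (by positivity), sub_eq_zero, sq_eq_sq₀ hT dist_nonneg,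
            eq_comm]
      _ ↔ dist A B = dist A D := by
          rw [hkey, mul_eq_zero_iff_left (by positivity), sq_eq_zero_iff, sub_eq_zero]

lemma eq_midpoint_of_mem_affineSpan_pair_of_mem_perpBisector {B D X : P}
    (hX : X ∈ line[ℝ, B, D]) (hX' : X ∈ AffineSubspace.perpBisector B D) :
    X = midpoint ℝ B D := by
  have hline : X -ᵥ midpoint ℝ B D ∈ ℝ ∙ (D -ᵥ B) := by
    rw [← vectorSpan_pair_rev, ← direction_affineSpan]
    refine AffineSubspace.vsub_mem_direction hX ?_
    rw [← lineMap_one_half]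
    exact AffineMap.lineMap_mem_affineSpan_pair _ _ _
  have hperp : X -ᵥ midpoint ℝ B D ∈ (ℝ ∙ (D -ᵥ B))ᗮ := by
    rw [← AffineSubspace.direction_perpBisector]
    exact AffineSubspace.vsub_mem_direction hX' (AffineSubspace.midpoint_mem_perpBisector B D)
  rw [← vsub_eq_zero_iff_eq]
  simpa using (Submodule.inf_orthogonal_eq_bot (ℝ ∙ (D -ᵥ B))).le ⟨hline, hperp⟩

lemma dist_eq_dist_midpoint_add_dist_midpoint_of_sOppSide {A B C D : P}
    (hA : dist A B = dist A D) (hC : dist C B = dist C D) (h : line[ℝ, B, D].SOppSide A C) :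
    dist A C = dist A (midpoint ℝ B D) + dist C (midpoint ℝ B D) := by
  obtain ⟨X, hX, hAXC⟩ := h.exists_sbtw
  have hX' : X ∈ AffineSubspace.perpBisector B D := by
    obtain ⟨t, -, rfl⟩ := hAXC.wbtw
    exact AffineMap.lineMap_mem t (AffineSubspace.mem_perpBisector_iff_dist_eq.2 hA)
      (AffineSubspace.mem_perpBisector_iff_dist_eq.2 hC)
  rw [← eq_midpoint_of_mem_affineSpan_pair_of_mem_perpBisector hX hX', dist_comm C X]
  exact hAXC.wbtw.dist_add_dist.symm

lemma dist_le_and_eq_iff_of_sOppSide {A B C D : P} (hA0 : 0 < ∠ D A B)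
    (hA1 : ∠ D A B < π / 2) (hC0 : 0 < ∠ D C B) (hC1 : ∠ D C B < π / 2)
    (h : line[ℝ, B, D].SOppSide A C) :
    dist A C ≤ dist B D / 2 * (cos (∠ D A B / 2) / sin (∠ D A B / 2) +
      cos (∠ D C B / 2) / sin (∠ D C B / 2)) ∧
    (dist A C = dist B D / 2 * (cos (∠ D A B / 2) / sin (∠ D A B / 2) +
      cos (∠ D C B / 2) / sin (∠ D C B / 2)) ↔
      dist A B = dist A D ∧ dist C B = dist C D) := by
  obtain ⟨hAle, hAeq⟩ := dist_midpoint_le_and_eq_iff_of_angle_lt_pi_div_two hA0 hA1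
  obtain ⟨hCle, hCeq⟩ := dist_midpoint_le_and_eq_iff_of_angle_lt_pi_div_two hC0 hC1
  have htri := dist_triangle_right A C (midpoint ℝ B D)
  refine ⟨by linarith, fun heq ↦ ⟨hAeq.1 (by linarith), hCeq.1 (by linarith)⟩, ?_⟩
  rintro ⟨hA, hC⟩
  rw [dist_eq_dist_midpoint_add_dist_midpoint_of_sOppSide hA hC h, hAeq.2 hA, hCeq.2 hC]
  ring

lemma dist_eq_of_isosceles_of_angle_eq_of_dist_eq {A B D A' B' D' : P}
    (hA : dist A B = dist A D) (hA' : dist A' B' = dist A' D') (hθ : ∠ D A B = ∠ D' A' B')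
    (hθ0 : ∠ D A B ≠ 0) (hBD : dist B D = dist B' D') : dist A B = dist A' B' := by
  have hcos : cos (∠ D A B) < 1 :=
    lt_of_le_of_ne (cos_le_one _) (mt cos_eq_one_iff_angle_eq_zero.1 hθ0)
  have hlaw := law_cos D A B
  have hlaw' := law_cos D' A' B'
  rw [dist_comm D A, dist_comm B A, ← hA, dist_comm D B] at hlaw
  rw [dist_comm D' A', dist_comm B' A', ← hA', dist_comm D' B', ← hθ, ← hBD] at hlaw'
  have hpos : 2 - 2 * cos (∠ D A B) ≠ 0 := by linarith
  refine (sq_eq_sq₀ dist_nonneg dist_nonneg).1 (mul_left_cancel₀ hpos ?_)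
  linear_combination hlaw' - hlaw

lemma sOppSide_reflection {s : AffineSubspace ℝ P} [Nonempty s]
    [s.direction.HasOrthogonalProjection] {X : P} (hX : X ∉ s) :
    s.SOppSide X (reflection s X) := by
  rw [reflection_apply']
  exact AffineSubspace.sOppSide_pointReflection (orthogonalProjection_mem X) hX

lemma sOppSide_map_affineSpan_pair (φ : P ≃ᵃ[ℝ] P) {A B C D : P}
    (h : line[ℝ, B, D].SOppSide A C) : line[ℝ, φ B, φ D].SOppSide (φ A) (φ C) := by
  have h' := (φ.sOppSide_map_iff (s := line[ℝ, B, D])).2 h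
  rwa [AffineSubspace.map_span, Set.image_pair] at h'

lemma exists_affineIsometryEquiv_apply_eq_apply_eq {B D B' D' : P}
    (h : dist B D = dist B' D') : ∃ ψ : P ≃ᵃⁱ[ℝ] P, ψ B = B' ∧ ψ D = D' := by
  let R := (ℝ ∙ ((D -ᵥ B) - (D' -ᵥ B')))ᗮ.reflection
  refine ⟨((AffineIsometryEquiv.vaddConst ℝ B).symm.trans R.toAffineIsometryEquiv).trans
    (AffineIsometryEquiv.vaddConst ℝ B'), ?_, ?_⟩
  · simp
  · have : R (D -ᵥ B) = D' -ᵥ B' := by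
      apply Submodule.reflection_sub
      rwa [← dist_eq_norm_vsub, ← dist_eq_norm_vsub, dist_comm, dist_comm D']
    simp [this]

variable [FiniteDimensional ℝ V]

lemma eq_or_eq_reflection_of_dist_eq_of_dist_eq (hd : Module.finrank ℝ V = 2) {B D X Y : P}
    (hBD : B ≠ D) (hX : X ∉ line[ℝ, B, D]) (hYB : dist Y B = dist X B)
    (hYD : dist Y D = dist X D) : Y = X ∨ Y = reflection line[ℝ, B, D] X := by
  have hR : ∀ Z ∈ line[ℝ, B, D], dist (reflection line[ℝ, B, D] X) Z = dist X Z :=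
    fun Z hZ ↦ by rw [dist_comm, dist_reflection_eq_of_mem _ hZ, dist_comm]
  refine eq_of_dist_eq_of_dist_eq_of_finrank_eq_two hd hBD ?_ rfl
    (hR B (left_mem_affineSpan_pair ℝ B D)) hYB rfl (hR D (right_mem_affineSpan_pair ℝ B D)) hYD
  exact fun h ↦ hX ((reflection_eq_self_iff X).1 h.symm)

lemma exists_affineIsometryEquiv_of_sOppSide (hd : Module.finrank ℝ V = 2)
    {A B C D A' B' C' D' : P} (hBD : B ≠ D) (h : line[ℝ, B, D].SOppSide A C)
    (h' : line[ℝ, B', D'].SOppSide A' C') (hBD' : dist B D = dist B' D')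
    (hAB : dist A B = dist A' B') (hAD : dist A D = dist A' D')
    (hCB : dist C B = dist C' B') (hCD : dist C D = dist C' D') :
    ∃ φ : P ≃ᵃⁱ[ℝ] P, φ A = A' ∧ φ B = B' ∧ φ C = C' ∧ φ D = D' := by
  have hB'D' : B' ≠ D' := dist_pos.1 (hBD' ▸ dist_pos.2 hBD)
  obtain ⟨φ, hφA, hφB, hφD⟩ :
      ∃ φ : P ≃ᵃⁱ[ℝ] P, φ A = A' ∧ φ B = B' ∧ φ D = D' := by
    obtain ⟨ψ, hψB, hψD⟩ := exists_affineIsometryEquiv_apply_eq_apply_eq hBD'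
    have hψ := sOppSide_map_affineSpan_pair ψ.toAffineEquiv h
    simp only [AffineIsometryEquiv.coe_toAffineEquiv, hψB, hψD] at hψ
    rcases eq_or_eq_reflection_of_dist_eq_of_dist_eq (Y := A') hd hB'D' hψ.2.1
      (by rw [← hAB, ← ψ.dist_map, hψB]) (by rw [← hAD, ← ψ.dist_map, hψD]) with hA | hA
    · exact ⟨ψ, hA.symm, hψB, hψD⟩
    · refine ⟨ψ.trans (reflection line[ℝ, B', D']), hA.symm, ?_, ?_⟩ <;>
        simp [hψB, hψD, reflection_eq_self_iff, left_mem_affineSpan_pair,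
          right_mem_affineSpan_pair]
  have hφ := sOppSide_map_affineSpan_pair φ.toAffineEquiv h
  simp only [AffineIsometryEquiv.coe_toAffineEquiv, hφA, hφB, hφD] at hφ
  rcases eq_or_eq_reflection_of_dist_eq_of_dist_eq (Y := C') hd hB'D' hφ.2.2
    (by rw [← hCB, ← φ.dist_map, hφB]) (by rw [← hCD, ← φ.dist_map, hφD]) with hC | hC
  · exact ⟨φ, hφA, hφB, hC.symm, hφD⟩
  · rw [hC] at h'
    exact absurd (hφ.trans (sOppSide_reflection hφ.2.2)) h'.not_sSameSide

end EuclideanGeometry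

/-- For a quadrilateral `ABCD` with `A` and `C` strictly on opposite sides of the line `BD`
and fixed acute angles `∠DAB = θ₁`, `∠DCB = θ₂`, one has
`|AC| ≤ (|BD|/2)·(cot(θ₁/2) + cot(θ₂/2))`, with equality iff `|AB| = |AD|` and
`|CB| = |CD|`; moreover the maximizing configuration is unique up to congruence. -/
theorem diagonal_maximized_quadrilateral (B D : Plane) (hBD : B ≠ D) (θ₁ θ₂ : ℝ)
    (hθ₁ : 0 < θ₁) (hθ₁' : θ₁ < π / 2) (hθ₂ : 0 < θ₂) (hθ₂' : θ₂ < π / 2)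
    (A C : Plane)
    (hside : (affineSpan ℝ ({B, D} : Set Plane)).SOppSide A C)
    (hA : ∠ D A B = θ₁) (hC : ∠ D C B = θ₂) :
    dist A C ≤ dist B D / 2 * (cos (θ₁ / 2) / sin (θ₁ / 2) + cos (θ₂ / 2) / sin (θ₂ / 2)) ∧
    (dist A C = dist B D / 2 * (cos (θ₁ / 2) / sin (θ₁ / 2) + cos (θ₂ / 2) / sin (θ₂ / 2)) ↔
      dist A B = dist A D ∧ dist C B = dist C D) ∧
    (∀ A' B' C' D' : Plane, B' ≠ D' → dist B' D' = dist B D →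
      (affineSpan ℝ ({B', D'} : Set Plane)).SOppSide A' C' →
      ∠ D' A' B' = θ₁ → ∠ D' C' B' = θ₂ →
      dist A C = dist B D / 2 * (cos (θ₁ / 2) / sin (θ₁ / 2) + cos (θ₂ / 2) / sin (θ₂ / 2)) →
      dist A' C' = dist B D / 2 * (cos (θ₁ / 2) / sin (θ₁ / 2) + cos (θ₂ / 2) / sin (θ₂ / 2)) →
      ∃ φ : Plane ≃ᵢ Plane, φ A = A' ∧ φ B = B' ∧ φ C = C' ∧ φ D = D') := by
  subst hA hC
  obtain ⟨hle, hiff⟩ := dist_le_and_eq_iff_of_sOppSide hθ₁ hθ₁' hθ₂ hθ₂' hside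
  refine ⟨hle, hiff, fun A' B' C' D' _ hBD' hside' hA' hC' heq heq' ↦ ?_⟩
  obtain ⟨hAB, hCB⟩ := hiff.1 heq
  obtain ⟨hA'B', hC'B'⟩ := (dist_le_and_eq_iff_of_sOppSide (hA' ▸ hθ₁) (hA' ▸ hθ₁')
    (hC' ▸ hθ₂) (hC' ▸ hθ₂') hside').2.1 (by rw [hA', hC', hBD']; exact heq')
  have hA := dist_eq_of_isosceles_of_angle_eq_of_dist_eq hAB hA'B' hA'.symm hθ₁.ne' hBD'.symm
  have hC := dist_eq_of_isosceles_of_angle_eq_of_dist_eq hCB hC'B' hC'.symm hθ₂.ne' hBD'.symm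
  obtain ⟨φ, hφ⟩ := exists_affineIsometryEquiv_of_sOppSide finrank_euclideanSpace_fin hBD
    hside hside' hBD'.symm hA (by rw [← hAB, hA, hA'B']) hC (by rw [← hCB, hC, hC'B'])
  exact ⟨φ.toIsometryEquiv, hφ⟩
end
end

section
/- Let A, B, C, D be points of the Euclidean plane with B ≠ D, dist(A, B) = dist(A, D), dist(C, B) = dist(C, D), with A and C lying strictly on opposite sides of the line through B and D, and with the angles ∠DAB and ∠DCB lying strictly between 0 and π/2. Let A', B', C', D' be points with dist(B', D') = dist(B, D), dist(A', C') = dist(A, C), ∠D'A'B' = ∠DAB, ∠D'C'B' = ∠DCB, and with A' and C' lying strictly on opposite sides of the line through B' and D'. Then the two quadrilaterals are congruent: there is an isometric equivalence φ : ℝ² ≃ᵢ ℝ² with φ(A) = A', φ(B) = B', φ(C) = C', φ(D) = D'. -/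
noncomputable section

open EuclideanGeometry Real

/-! For a triangle `pbd` with midpoint `M` of `bd`, the median satisfies
`|pM|² = |bd|²/4 + |pb|·|pd|·cos ∠bpd`, and by the law of cosines, for a given base `|bd|` and
apex angle, the product `|pb|·|pd|` is largest exactly when the triangle is isosceles. So when the
apex angles are acute, `|A'M'| ≤ |AM|` and `|C'M'| ≤ |CM|`. Since `AC` is the perpendicular
bisector of `BD` and `A`, `C` lie on opposite sides of `BD`, `M` lies on the segment `AC`, hence
`|A'C'| ≤ |A'M'| + |M'C'| ≤ |AM| + |MC| = |AC| = |A'C'|`. Equality forces the triangles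
`A'B'D'` and `C'B'D'` to be isosceles with the legs of `ABD` and `CBD`, so all six distances
agree, and in the plane they determine the quadrilateral up to isometry since `A'` is off the
line `B'D'`. -/

namespace EuclideanGeometry

variable {V P : Type*} [NormedAddCommGroup V] [InnerProductSpace ℝ V] [MetricSpace P]
  [NormedAddTorsor V P]

theorem dist_midpoint_sq_eq_add_mul_cos (p b d : P) :
    dist p (midpoint ℝ b d) ^ 2 = dist b d ^ 2 / 4 + dist p b * dist p d * cos (∠ b p d) := by
  have hmedian := dist_sq_add_dist_sq_eq_two_mul_dist_midpoint_sq_add_half_dist_sq p b d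
  have hcos := law_cos b p d
  rw [dist_comm b p, dist_comm d p] at hcos
  linarith

section Isosceles

variable {p b d q b' d' : P}

theorem sq_dist_sub_dist_eq_of_angle_eq (hp : dist p b = dist p d)
    (hd : dist b' d' = dist b d) (hang : ∠ d' q b' = ∠ d p b) :
    (dist q b' - dist q d') ^ 2 =
      2 * (1 - cos (∠ d p b)) * (dist p b ^ 2 - dist q b' * dist q d') := by
  have hcos := law_cos b p d
  have hcos' := law_cos b' q d'
  rw [angle_comm b p d, dist_comm b p, dist_comm d p, ← hp] at hcos
  rw [angle_comm b' q d', hang, hd, dist_comm b' q, dist_comm d' q] at hcos'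
  linear_combination hcos - hcos'

theorem dist_mul_dist_le_of_angle_eq (hbd : b ≠ d) (hp : dist p b = dist p d)
    (hd : dist b' d' = dist b d) (hang : ∠ d' q b' = ∠ d p b) :
    dist q b' * dist q d' ≤ dist p b ^ 2 := by
  have hcos := law_cos b p d
  rw [angle_comm b p d, dist_comm b p, dist_comm d p, ← hp] at hcos
  have hbd_pos : 0 < dist b d := dist_pos.2 hbd
  have h_one_sub_cos : 0 < 2 * (1 - cos (∠ d p b)) := by
    nlinarith [sq_nonneg (dist p b), cos_le_one (∠ d p b)]
  have hsq := sq_dist_sub_dist_eq_of_angle_eq hp hd hang ▸ sq_nonneg (dist q b' - dist q d')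
  linarith [(mul_nonneg_iff_of_pos_left h_one_sub_cos).1 hsq]

theorem dist_midpoint_le_of_angle_eq (hbd : b ≠ d) (hp : dist p b = dist p d)
    (hd : dist b' d' = dist b d) (hang : ∠ d' q b' = ∠ d p b) (hacute : ∠ d p b ≤ π / 2) :
    dist q (midpoint ℝ b' d') ≤ dist p (midpoint ℝ b d) := by
  have hmul := dist_mul_dist_le_of_angle_eq hbd hp hd hang
  have hcos : 0 ≤ cos (∠ d p b) :=
    cos_nonneg_of_neg_pi_div_two_le_of_le (by linarith [angle_nonneg d p b, pi_pos]) hacute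
  rw [← pow_le_pow_iff_left₀ dist_nonneg dist_nonneg two_ne_zero, dist_midpoint_sq_eq_add_mul_cos,
    dist_midpoint_sq_eq_add_mul_cos, angle_comm b' q d', hang, angle_comm b p d, hd, ← hp]
  linarith [mul_le_mul_of_nonneg_right hmul hcos]

theorem dist_eq_of_dist_midpoint_eq (hp : dist p b = dist p d)
    (hd : dist b' d' = dist b d) (hang : ∠ d' q b' = ∠ d p b) (hacute : ∠ d p b < π / 2)
    (heq : dist q (midpoint ℝ b' d') = dist p (midpoint ℝ b d)) :
    dist q b' = dist p b ∧ dist q d' = dist p d := by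
  have hcos : 0 < cos (∠ d p b) :=
    cos_pos_of_mem_Ioo ⟨by linarith [angle_nonneg d p b, pi_pos], hacute⟩
  have hsq := congrArg (· ^ 2) heq
  simp only [dist_midpoint_sq_eq_add_mul_cos] at hsq
  rw [angle_comm b' q d', hang, angle_comm b p d, hd, ← hp] at hsq
  have hmul : dist q b' * dist q d' = dist p b ^ 2 :=
    mul_right_cancel₀ hcos.ne' (by linear_combination hsq)
  have hxy : dist q b' = dist q d' := by
    have := sq_dist_sub_dist_eq_of_angle_eq hp hd hang
    rw [hmul, sub_self, mul_zero] at this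
    exact sub_eq_zero.1 (pow_eq_zero_iff two_ne_zero |>.1 this)
  have hx : dist q b' = dist p b := by
    rw [← hxy, ← sq] at hmul
    exact (pow_left_inj₀ dist_nonneg dist_nonneg two_ne_zero).1 hmul
  exact ⟨hx, hxy ▸ hx.trans hp⟩

end Isosceles

theorem eq_midpoint_of_mem_affineSpan_pair_of_dist_eq {b d p : P} (hbd : b ≠ d)
    (hp : p ∈ line[ℝ, b, d]) (hdist : dist p b = dist p d) : p = midpoint ℝ b d := by
  obtain ⟨t, rfl⟩ := mem_affineSpan_pair_iff_exists_lineMap_eq.1 hp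
  rw [dist_lineMap_left, dist_lineMap_right, Real.norm_eq_abs, Real.norm_eq_abs] at hdist
  have ht : t = 1 / 2 := by
    rcases abs_eq_abs.1 (mul_right_cancel₀ (dist_ne_zero.2 hbd) hdist) with h | h <;> linarith
  rw [ht, midpoint, one_div, invOf_eq_inv]

theorem wbtw_midpoint_of_sOppSide {a b c d : P} (hbd : b ≠ d) (ha : dist a b = dist a d)
    (hc : dist c b = dist c d) (hac : line[ℝ, b, d].SOppSide a c) :
    Wbtw ℝ a (midpoint ℝ b d) c := by
  obtain ⟨p, hp, hapc⟩ := AffineSubspace.wOppSide_iff_exists_wbtw.1 hac.wOppSide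
  have hperp : p ∈ AffineSubspace.perpBisector b d := by
    obtain ⟨t, -, rfl⟩ := hapc
    exact AffineMap.lineMap_mem t (AffineSubspace.mem_perpBisector_iff_dist_eq.2 ha)
      (AffineSubspace.mem_perpBisector_iff_dist_eq.2 hc)
  rwa [← eq_midpoint_of_mem_affineSpan_pair_of_dist_eq hbd hp
    (AffineSubspace.mem_perpBisector_iff_dist_eq.1 hperp)]

theorem exists_affineIsometryEquiv_map_pair {p₁ p₂ q₁ q₂ : P}
    (h : dist p₁ p₂ = dist q₁ q₂) :
    ∃ φ : P ≃ᵃⁱ[ℝ] P, φ p₁ = q₁ ∧ φ p₂ = q₂ := by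
  let R := (ℝ ∙ ((p₂ -ᵥ p₁) - (q₂ -ᵥ q₁)))ᗮ.reflection
  have hR : R (p₂ -ᵥ p₁) = q₂ -ᵥ q₁ := by
    apply Submodule.reflection_sub
    rw [← dist_eq_norm_vsub' V, ← dist_eq_norm_vsub' V, h]
  refine ⟨((AffineIsometryEquiv.vaddConst ℝ p₁).symm.trans R.toAffineIsometryEquiv).trans
    (AffineIsometryEquiv.vaddConst ℝ q₁), ?_, ?_⟩
  · simp
  · simp [hR]

section FinrankTwo

open AffineSubspace Module

variable [FiniteDimensional ℝ V] (hd : finrank ℝ V = 2)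
include hd

theorem affineSpan_pair_eq_perpBisector {x y c₁ c₂ : P} (hxy : x ≠ y) (hc : c₁ ≠ c₂)
    (h₁ : c₁ ∈ perpBisector x y) (h₂ : c₂ ∈ perpBisector x y) :
    line[ℝ, c₁, c₂] = perpBisector x y := by
  have hle := affineSpan_pair_le_of_mem_of_mem h₁ h₂
  refine eq_of_direction_eq_of_nonempty_of_le ?_ ⟨c₁, left_mem_affineSpan_pair ℝ c₁ c₂⟩ hle
  refine Submodule.eq_of_le_of_finrank_eq (direction_le hle) ?_
  have hperp := (ℝ ∙ (y -ᵥ x)).finrank_add_finrank_orthogonal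
  rw [finrank_span_singleton (vsub_ne_zero.2 hxy.symm), hd] at hperp
  rw [direction_perpBisector, direction_affineSpan, vectorSpan_pair,
    finrank_span_singleton (vsub_ne_zero.2 hc)]
  omega

theorem eq_of_dist_eq_of_notMem_affineSpan_pair {c₁ c₂ c₃ x y : P} (hc : c₁ ≠ c₂)
    (hc₃ : c₃ ∉ line[ℝ, c₁, c₂]) (h₁ : dist x c₁ = dist y c₁) (h₂ : dist x c₂ = dist y c₂)
    (h₃ : dist x c₃ = dist y c₃) : x = y := by
  by_contra hxy
  rw [← mem_perpBisector_iff_dist_eq'] at h₁ h₂ h₃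
  exact hc₃ (affineSpan_pair_eq_perpBisector hd hxy hc h₁ h₂ ▸ h₃)

theorem eq_or_eq_reflection_affineSpan_pair_of_dist_eq {c₁ c₂ x y : P} (hc : c₁ ≠ c₂)
    (hy : y ∉ line[ℝ, c₁, c₂]) (h₁ : dist x c₁ = dist y c₁) (h₂ : dist x c₂ = dist y c₂) :
    x = y ∨ x = reflection line[ℝ, c₁, c₂] y := by
  have hrefl : y ≠ reflection line[ℝ, c₁, c₂] y := fun h ↦ hy ((reflection_eq_self_iff y).1 h.symm)
  have hrefl_dist {c : P} (hc : c ∈ line[ℝ, c₁, c₂]) :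
      dist (reflection line[ℝ, c₁, c₂] y) c = dist y c := by
    rw [dist_comm, dist_reflection_eq_of_mem _ hc, dist_comm]
  exact eq_of_dist_eq_of_dist_eq_of_finrank_eq_two hd hc hrefl rfl
    (hrefl_dist (left_mem_affineSpan_pair ℝ c₁ c₂)) h₁ rfl
    (hrefl_dist (right_mem_affineSpan_pair ℝ c₁ c₂)) h₂

theorem exists_affineIsometryEquiv_map_triangle {a b d a' b' d' : P} (hb'd' : b' ≠ d')
    (ha' : a' ∉ line[ℝ, b', d']) (hab : dist a b = dist a' b') (had : dist a d = dist a' d')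
    (hbd : dist b d = dist b' d') :
    ∃ φ : P ≃ᵃⁱ[ℝ] P, φ a = a' ∧ φ b = b' ∧ φ d = d' := by
  obtain ⟨ψ, hψb, hψd⟩ := exists_affineIsometryEquiv_map_pair hbd
  have hψa_b : dist (ψ a) b' = dist a' b' := by rw [← hψb, ψ.dist_map, hab, hψb]
  have hψa_d : dist (ψ a) d' = dist a' d' := by rw [← hψd, ψ.dist_map, had, hψd]
  rcases eq_or_eq_reflection_affineSpan_pair_of_dist_eq hd hb'd' ha' hψa_b hψa_d with h | h
  · exact ⟨ψ, h, hψb, hψd⟩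
  · refine ⟨ψ.trans (reflection line[ℝ, b', d']), ?_, ?_, ?_⟩ <;>
      simp only [AffineIsometryEquiv.coe_trans, Function.comp_apply]
    · rw [h, reflection_reflection]
    · rw [hψb, reflection_eq_self_iff]
      exact left_mem_affineSpan_pair ℝ b' d'
    · rw [hψd, reflection_eq_self_iff]
      exact right_mem_affineSpan_pair ℝ b' d'

end FinrankTwo

end EuclideanGeometry

theorem kite_four_measurements_general (A B C D A' B' C' D' : Plane) (hBD : B ≠ D)
    (h1 : dist A B = dist A D) (h2 : dist C B = dist C D)
    (hside : (affineSpan ℝ ({B, D} : Set Plane)).SOppSide A C)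
    (hA1 : ∠ D A B < π / 2) (hC1 : ∠ D C B < π / 2)
    (e1 : dist B' D' = dist B D) (e2 : dist A' C' = dist A C)
    (e3 : ∠ D' A' B' = ∠ D A B) (e4 : ∠ D' C' B' = ∠ D C B)
    (hside' : (affineSpan ℝ ({B', D'} : Set Plane)).SOppSide A' C') :
    ∃ φ : Plane ≃ᵢ Plane, φ A = A' ∧ φ B = B' ∧ φ C = C' ∧ φ D = D' := by
  set M := midpoint ℝ B D
  set M' := midpoint ℝ B' D'
  have hB'D' : B' ≠ D' := dist_pos.1 (e1 ▸ dist_pos.2 hBD)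
  have hAM : dist A' M' ≤ dist A M := dist_midpoint_le_of_angle_eq hBD h1 e1 e3 hA1.le
  have hCM : dist C' M' ≤ dist C M := dist_midpoint_le_of_angle_eq hBD h2 e1 e4 hC1.le
  have hAC : dist A M + dist C M = dist A C := by
    rw [dist_comm C]
    exact (wbtw_midpoint_of_sOppSide hBD h1 h2 hside).dist_add_dist
  have hA'C' : dist A' C' ≤ dist A' M' + dist C' M' := dist_triangle_right A' C' M'
  obtain ⟨hA'B', hA'D'⟩ := dist_eq_of_dist_midpoint_eq h1 e1 e3 hA1 (by linarith)
  obtain ⟨hC'B', hC'D'⟩ := dist_eq_of_dist_midpoint_eq h2 e1 e4 hC1 (by linarith)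
  obtain ⟨φ, hφA, hφB, hφD⟩ := exists_affineIsometryEquiv_map_triangle
    finrank_euclideanSpace_fin hB'D' hside'.2.1 hA'B'.symm hA'D'.symm e1.symm
  have hφC : φ C = C' := by
    refine eq_of_dist_eq_of_notMem_affineSpan_pair finrank_euclideanSpace_fin hB'D'
      hside'.2.1 ?_ ?_ ?_
    · rw [← hφB, φ.dist_map, hφB, hC'B']
    · rw [← hφD, φ.dist_map, hφD, hC'D']
    · rw [← hφA, φ.dist_map, hφA, dist_comm, ← e2, dist_comm]
  exact ⟨φ.toIsometryEquiv, hφA, hφB, hφC, hφD⟩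

/-- A quadrilateral `ABCD` in which `AC` is the perpendicular bisector of `BD`
(i.e. `|AB| = |AD|` and `|CB| = |CD|`), with `A`, `C` strictly on opposite sides of the
line `BD` and the angles `∠DAB`, `∠DCB` acute, is determined up to congruence by the four
measurements `|BD|`, `|AC|`, `∠DAB` and `∠DCB`. -/
theorem kite_four_measurements (A B C D A' B' C' D' : Plane) (hBD : B ≠ D)
    (h1 : dist A B = dist A D) (h2 : dist C B = dist C D)
    (hside : (affineSpan ℝ ({B, D} : Set Plane)).SOppSide A C)
    (hA0 : 0 < ∠ D A B) (hA1 : ∠ D A B < π / 2)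
    (hC0 : 0 < ∠ D C B) (hC1 : ∠ D C B < π / 2)
    (e1 : dist B' D' = dist B D) (e2 : dist A' C' = dist A C)
    (e3 : ∠ D' A' B' = ∠ D A B) (e4 : ∠ D' C' B' = ∠ D C B)
    (hside' : (affineSpan ℝ ({B', D'} : Set Plane)).SOppSide A' C') :
    ∃ φ : Plane ≃ᵢ Plane, φ A = A' ∧ φ B = B' ∧ φ C = C' ∧ φ D = D' :=
  kite_four_measurements_general A B C D A' B' C' D' hBD h1 h2 hside hA1 hC1 e1 e2 e3 e4 hside'
end
end

section
/- Let d > 0 and let A, B, C, D be points of three-dimensional Euclidean space with dist(A, B) = d, dist(A, D) = d, dist(A, C) = d·√2, and ∠BCD = π/2. Then the four points are coplanar and form a square of side d: dist(B, C) = d, dist(C, D) = d, and dist(B, D) = d·√2. (Thus the four measurements determining a square also guarantee its planarity when the points are allowed to lie in space.) -/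
noncomputable section

open EuclideanGeometry Real
open scoped InnerProductSpace

/-- Three-dimensional Euclidean space. -/
abbrev Space : Type := EuclideanSpace ℝ (Fin 3)

/-- The four measurements determining a square also guarantee planarity in space: if
`|AB| = |AD| = d`, `|AC| = d√2` and `∠BCD = π/2` for points of `ℝ³`, then `A, B, C, D`
are coplanar and form a square of side `d`. -/
theorem square_four_measurements_in_space (d : ℝ) (hd : 0 < d) (A B C D : Space)
    (hAB : dist A B = d) (hAD : dist A D = d) (hAC : dist A C = d * Real.sqrt 2)
    (hBCD : ∠ B C D = π / 2) :
    Coplanar ℝ ({A, B, C, D} : Set Space) ∧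
      dist B C = d ∧ dist C D = d ∧ dist B D = d * Real.sqrt 2 := by
  have hinner : ⟪B - C, D - C⟫_ℝ = 0 := by
    have := (InnerProductGeometry.inner_eq_zero_iff_angle_eq_pi_div_two (B -ᵥ C) (D -ᵥ C)).mpr hBCD
    simpa using this
  have expand : ∀ X Y : Space, ‖X - Y‖ ^ 2 = ⟪X, X⟫_ℝ - 2 * ⟪X, Y⟫_ℝ + ⟪Y, Y⟫_ℝ := by
    intro X Y
    rw [← real_inner_self_eq_norm_sq]
    simp only [inner_sub_left, inner_sub_right]
    rw [real_inner_comm Y X]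
    ring
  have h1 : ⟪A, A⟫_ℝ - 2 * ⟪A, B⟫_ℝ + ⟪B, B⟫_ℝ = d ^ 2 := by
    rw [← expand, ← dist_eq_norm, hAB]
  have h2 : ⟪A, A⟫_ℝ - 2 * ⟪A, D⟫_ℝ + ⟪D, D⟫_ℝ = d ^ 2 := by
    rw [← expand, ← dist_eq_norm, hAD]
  have h3 : ⟪A, A⟫_ℝ - 2 * ⟪A, C⟫_ℝ + ⟪C, C⟫_ℝ = 2 * d ^ 2 := by
    rw [← expand, ← dist_eq_norm, hAC, mul_pow, sq_sqrt (by norm_num : (0:ℝ) ≤ 2)]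
    ring
  have hinner' := hinner
  simp only [inner_sub_left, inner_sub_right] at hinner'
  -- key: A = B + D - C
  have hz : ‖A - (B + D - C)‖ ^ 2 = 0 := by
    rw [← real_inner_self_eq_norm_sq]
    simp only [inner_sub_left, inner_sub_right, inner_add_left, inner_add_right]
    linarith [real_inner_comm A B, real_inner_comm A C, real_inner_comm A D,
      real_inner_comm B C, real_inner_comm B D, real_inner_comm C D, hinner', h1, h2, h3]
  have h0 : A - (B + D - C) = 0 := by
    rw [← norm_eq_zero]
    exact pow_eq_zero_iff two_ne_zero |>.mp hz
  have hkey : A = B + D - C := sub_eq_zero.mp h0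
  subst hkey
  -- side lengths
  have eBC : (B + D - C) - D = B - C := by abel
  have eDC : (B + D - C) - B = D - C := by abel
  rw [dist_eq_norm, eDC] at hAB
  rw [dist_eq_norm, eBC] at hAD
  have hBC : dist B C = d := by rw [dist_eq_norm]; exact hAD
  have hCD : dist C D = d := by rw [dist_comm, dist_eq_norm]; exact hAB
  -- diagonal
  have hBD2 : ‖B - D‖ ^ 2 = 2 * d ^ 2 := by
    have h := norm_sub_sq_real (B - C) (D - C)
    rw [show (B - C) - (D - C) = B - D by abel, hinner, hAD, hAB] at h
    rw [h]; ring
  have hBD : dist B D = d * Real.sqrt 2 := by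
    rw [dist_eq_norm, show ‖B - D‖ = Real.sqrt (‖B - D‖ ^ 2) from
      (Real.sqrt_sq (norm_nonneg _)).symm, hBD2,
      show (2 : ℝ) * d ^ 2 = d ^ 2 * 2 by ring,
      Real.sqrt_mul (sq_nonneg d), Real.sqrt_sq hd.le]
  refine ⟨?_, hBC, hCD, hBD⟩
  -- coplanarity
  have hD : D ∈ affineSpan ℝ ({B, C, D} : Set Space) := mem_affineSpan ℝ (by simp)
  have hdir : B -ᵥ C ∈ (affineSpan ℝ ({B, C, D} : Set Space)).direction := by
    rw [direction_affineSpan]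
    exact vsub_mem_vectorSpan ℝ (by simp) (by simp)
  have hmem : B + D - C ∈ affineSpan ℝ ({B, C, D} : Set Space) := by
    have := AffineSubspace.vadd_mem_of_mem_direction hdir hD
    have heq : B + D - C = (B -ᵥ C) +ᵥ D := by
      simp only [vsub_eq_sub, vadd_eq_add]; abel
    rwa [heq]
  have hcop : Coplanar ℝ ({B, C, D} : Set Space) :=
    (collinear_pair ℝ C D).coplanar_insert B
  exact (coplanar_insert_iff_of_mem_affineSpan hmem).mpr hcop
end
end

section
/- Let Γ be a finite simple graph on r vertices such that every induced subgraph of Γ on m vertices with m ≥ 3 has at most 2m − 4 edges (a property enjoyed by every planar bipartite graph). Then there is an ordering n₁, n₂, …, n_r of the vertices of Γ such that each vertex n_i is adjacent to at most three of the preceding vertices n₁, …, n_{i−1}. -/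
/-!
Summing over a vertex set `s` the number of neighbours inside `s` counts every edge of the
induced subgraph twice, so if every vertex of `s` had at least four neighbours in `s` then
`s` would span at least `2|s|` edges, more than the assumed `2|s| - 4`. Hence every nonempty
vertex set contains a vertex with at most three neighbours in it (the graph is
3-degenerate). Putting such a vertex of the whole graph last and ordering the rest
recursively gives the required ordering.
-/

noncomputable section

open Finset

namespace SimpleGraph

variable {V : Type*} (G : SimpleGraph V)

open scoped Classical

theorem card_edgeFinset_induce_eq_card_filter [Fintype V] (s : Finset V) :
    #(G.induce (s : Set V)).edgeFinset = #{e ∈ G.edgeFinset | ∀ v ∈ e, v ∈ s} := by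
  have h := congrArg card (G.map_edgeFinset_induce (s := (s : Set V)))
  rw [card_map, toFinset_coe] at h
  convert h using 2
  · ext; simp
  · ext; simp [mem_sym2_iff]

theorem degree_induce_eq_card_filter_adj [Fintype V] (s : Finset V) (v : (s : Set V)) :
    (G.induce (s : Set V)).degree v = #{w ∈ s | G.Adj v w} := by
  have h := congrArg card (G.map_neighborFinset_induce (s := (s : Set V)) v)
  rw [card_map, toFinset_coe, card_neighborFinset_eq_degree] at h
  convert h using 2
  ext w
  simp [and_comm]

theorem sum_card_filter_adj_eq_two_mul [Fintype V] (s : Finset V) :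
    ∑ v ∈ s, #{w ∈ s | G.Adj v w} = 2 * #{e ∈ G.edgeFinset | ∀ v ∈ e, v ∈ s} := by
  rw [← card_edgeFinset_induce_eq_card_filter, ← sum_degrees_eq_twice_card_edges,
    ← sum_coe_sort s]
  exact sum_congr rfl fun v _ => (G.degree_induce_eq_card_filter_adj s v).symm

theorem exists_mem_card_filter_adj_le_three [Fintype V]
    (h : ∀ s : Finset V, 3 ≤ #s → #{e ∈ G.edgeFinset | ∀ v ∈ e, v ∈ s} ≤ 2 * #s - 4)
    {s : Finset V} (hs : s.Nonempty) : ∃ v ∈ s, #{w ∈ s | G.Adj v w} ≤ 3 := by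
  by_contra! hdeg
  obtain ⟨v, hv⟩ := hs
  have hfive : 5 ≤ #s := by
    have hsub : {w ∈ s | G.Adj v w} ⊆ s.erase v := fun w hw =>
      mem_erase.2 ⟨(G.ne_of_adj (mem_filter.1 hw).2).symm, (mem_filter.1 hw).1⟩
    have := (hdeg v hv).trans_le (card_le_card hsub)
    have := card_erase_add_one hv
    omega
  have hsum : 4 * #s ≤ 2 * #{e ∈ G.edgeFinset | ∀ v ∈ e, v ∈ s} := by
    rw [← sum_card_filter_adj_eq_two_mul, mul_comm, ← smul_eq_mul, ← sum_const]
    exact sum_le_sum fun w hw => hdeg w hw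
  have := h s (by omega)
  omega

theorem exists_rank_of_forall_exists_card_filter_adj_le {k : ℕ}
    (hk : ∀ s : Finset V, s.Nonempty → ∃ v ∈ s, #{w ∈ s | G.Adj v w} ≤ k)
    (s : Finset V) :
    ∃ r : V → ℕ, Set.InjOn r s ∧ (∀ v ∈ s, r v < #s) ∧
      ∀ v ∈ s, #{w ∈ s | r w < r v ∧ G.Adj w v} ≤ k := by
  induction s using Finset.strongInduction with
  | H s ih =>
  rcases s.eq_empty_or_nonempty with rfl | hs
  · exact ⟨fun _ => 0, by simp, by simp, by simp⟩
  obtain ⟨v, hv, hvk⟩ := hk s hs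
  obtain ⟨r, hinj, hlt, hback⟩ := ih (s.erase v) (erase_ssubset hv)
  have hcard : #(s.erase v) + 1 = #s := card_erase_add_one hv
  set r' := Function.update r v #(s.erase v)
  have hr'_lt : ∀ w ∈ s, w ≠ v → r' w < #(s.erase v) := fun w hw hwv => by
    simpa [r', hwv] using hlt w (mem_erase.2 ⟨hwv, hw⟩)
  refine ⟨r', ?_, ?_, ?_⟩
  · intro a ha b hb hab
    rcases eq_or_ne v a with rfl | hav <;> rcases eq_or_ne v b with rfl | hbv
    · rfl
    · exact absurd hab (by simpa [r'] using (hr'_lt b hb hbv.symm).ne')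
    · exact absurd hab (by simpa [r'] using (hr'_lt a ha hav.symm).ne)
    · exact hinj (mem_erase.2 ⟨hav.symm, ha⟩) (mem_erase.2 ⟨hbv.symm, hb⟩)
        (by simpa [r', hav.symm, hbv.symm] using hab)
  · intro w hw
    rcases eq_or_ne v w with rfl | hwv
    · simp [r']; omega
    · have := hr'_lt w hw hwv.symm; omega
  · intro w hw
    rcases eq_or_ne v w with rfl | hwv
    · refine le_trans (card_le_card fun u hu => ?_) hvk
      simp only [mem_filter] at hu ⊢
      exact ⟨hu.1, hu.2.2.symm⟩
    · refine le_trans (card_le_card fun u hu => ?_) (hback w (mem_erase.2 ⟨hwv.symm, hw⟩))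
      simp only [mem_filter, mem_erase] at hu ⊢
      have huv : u ≠ v := by
        rintro rfl
        exact (hr'_lt w hw hwv.symm).not_ge (by simpa [r'] using hu.2.1.le)
      refine ⟨⟨huv, hu.1⟩, ?_⟩
      simpa [r', huv, hwv.symm] using hu.2

theorem exists_equiv_fin_card_filter_lt_adj_le [Fintype V] {k : ℕ}
    (hk : ∀ s : Finset V, s.Nonempty → ∃ v ∈ s, #{w ∈ s | G.Adj v w} ≤ k) :
    ∃ e : Fin (Fintype.card V) ≃ V, ∀ i, #{j | j < i ∧ G.Adj (e j) (e i)} ≤ k := by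
  obtain ⟨r, hinj, hlt, hback⟩ := G.exists_rank_of_forall_exists_card_filter_adj_le hk univ
  let rank : V → Fin (Fintype.card V) := fun v => ⟨r v, by simpa using hlt v (mem_univ v)⟩
  have hrank : rank.Bijective := (Fintype.bijective_iff_injective_and_card rank).2
    ⟨fun a b hab => hinj (mem_univ a) (mem_univ b) (congrArg Fin.val hab), by simp⟩
  let e := (Equiv.ofBijective rank hrank).symm
  have hre : ∀ j, r (e j) = j := fun j =>
    congrArg Fin.val ((Equiv.ofBijective rank hrank).apply_symm_apply j)
  refine ⟨e, fun i => ?_⟩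
  calc #{j | j < i ∧ G.Adj (e j) (e i)} = #{w | r w < r (e i) ∧ G.Adj w (e i)} :=
        card_equiv e fun j => by simp [hre]
    _ ≤ k := by simpa using hback (e i) (mem_univ _)

end SimpleGraph

open scoped Classical in
/-- If every `m`-vertex induced subgraph (`m ≥ 3`) of a finite simple graph `Γ` has at
most `2m - 4` edges (as holds for planar bipartite graphs), then the vertices of `Γ` can
be ordered so that each vertex is adjacent to at most three earlier vertices. -/
theorem ordering_with_few_back_neighbors {V : Type*} [Fintype V] (Γ : SimpleGraph V)
    (h : ∀ s : Finset V, 3 ≤ s.card →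
      (Γ.edgeFinset.filter fun e => ∀ v ∈ e, v ∈ s).card ≤ 2 * s.card - 4) :
    ∃ e : Fin (Fintype.card V) ≃ V, ∀ i : Fin (Fintype.card V),
      (Finset.univ.filter fun j : Fin (Fintype.card V) =>
        j < i ∧ Γ.Adj (e j) (e i)).card ≤ 3 :=
  Γ.exists_equiv_fin_card_filter_lt_adj_le fun _ hs => Γ.exists_mem_card_filter_adj_le_three h hs
end
end

section
/- Let A, B, C be points of the Euclidean plane with 0 < dist(A, B) < dist(A, C). Then sin(∠BCA) ≤ dist(A, B) / dist(A, C), with equality if and only if ∠ABC = π/2. (Geometrically: among points C at fixed distance from A, the angle subtended at C by a segment AB is maximized exactly when CB is tangent to the circle of radius |AB| about A, i.e. when the angle at B is right.) -/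
noncomputable section

open EuclideanGeometry Real

open InnerProductGeometry in
lemma law_of_sines_aux (A B C : Plane) :
    Real.sin (∠ A B C) * (dist A B * dist C B) =
      Real.sin (∠ B C A) * (dist B C * dist A C) := by
  have h1 : ∠ A B C = InnerProductGeometry.angle (A -ᵥ B) (C -ᵥ B) := rfl
  have h2 : ∠ B C A = InnerProductGeometry.angle (B -ᵥ C) (A -ᵥ C) := rfl
  rw [h1, h2, dist_eq_norm_vsub Plane, dist_eq_norm_vsub Plane, dist_eq_norm_vsub Plane,
    dist_eq_norm_vsub Plane, sin_angle_mul_norm_mul_norm, sin_angle_mul_norm_mul_norm]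
  congr 1
  set x : Plane := B -ᵥ C
  set y : Plane := A -ᵥ C
  have hx : A -ᵥ B = y - x := by simp [x, y, vsub_sub_vsub_cancel_right]
  have hy : C -ᵥ B = -x := by simp [x, neg_vsub_eq_vsub_rev]
  rw [hx, hy]
  simp only [inner_sub_sub_self, inner_neg_left, inner_sub_left, inner_sub_right,
    inner_neg_right, real_inner_comm x y]
  ring

lemma sin_eq_one_iff_of_mem (θ : ℝ) (h0 : 0 ≤ θ) (hπ : θ ≤ π) :
    Real.sin θ = 1 ↔ θ = π / 2 := by
  constructor
  · intro h
    have hc : Real.cos θ = 0 := by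
      nlinarith [Real.sin_sq_add_cos_sq θ, sq_nonneg (Real.cos θ)]
    rcases Real.cos_eq_zero_iff.1 hc with ⟨k, hk⟩
    have hπ0 := Real.pi_pos
    have : k = 0 := by
      rcases lt_trichotomy k 0 with hk0 | hk0 | hk0
    
      · exfalso
        have : (2 * (k : ℝ) + 1) ≤ -1 := by
          have hk1 : k ≤ -1 := by omega
          have : (k : ℝ) ≤ -1 := by exact_mod_cast hk1
          linarith
        nlinarith [hk ▸ h0]
      · exact hk0
      · exfalso
        have : (3 : ℝ) ≤ 2 * (k : ℝ) + 1 := by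
          have : (1 : ℝ) ≤ (k : ℝ) := by exact_mod_cast hk0
          linarith
        nlinarith [hk ▸ hπ]
    rw [this] at hk; push_cast at hk; linarith
  · intro h; rw [h, Real.sin_pi_div_two]

/-- If `0 < |AB| < |AC|` then `sin (∠BCA) ≤ |AB| / |AC|`, with equality exactly when the
angle at `B` is right: the angle subtended at `C` by the segment `AB` is maximized when
`CB` is tangent to the circle of radius `|AB|` about `A`. -/
theorem subtended_angle_max (A B C : Plane)
    (h1 : 0 < dist A B) (h2 : dist A B < dist A C) :
    sin (∠ B C A) ≤ dist A B / dist A C ∧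
      (sin (∠ B C A) = dist A B / dist A C ↔ ∠ A B C = π / 2) := by
  have hAC : 0 < dist A C := h1.trans h2
  have hBC : B ≠ C := by
    rintro rfl; exact absurd h2 (lt_irrefl _)
  have hBC' : 0 < dist B C := dist_pos.2 hBC
  have hlaw := law_of_sines_aux A B C
  rw [dist_comm C B] at hlaw
  -- sin (∠ B C A) = sin (∠ A B C) * dist A B / dist A C
  have key : sin (∠ B C A) = sin (∠ A B C) * (dist A B / dist A C) := by
    field_simp
    nlinarith [hlaw]
  have hs1 : sin (∠ A B C) ≤ 1 := Real.sin_le_one _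
  have hq : 0 < dist A B / dist A C := div_pos h1 hAC
  constructor
  · rw [key]
    nlinarith
  · rw [key, ← sin_eq_one_iff_of_mem _ (angle_nonneg A B C) (angle_le_pi A B C)]
    constructor
    · intro h
      have : (sin (∠ A B C) - 1) * (dist A B / dist A C) = 0 := by linarith
      rcases mul_eq_zero.1 this with h' | h'
      · linarith
      · exact absurd h' hq.ne'
    · intro h; rw [h, one_mul]
end
end

section
/- Let n ≥ 2 and let A₁, …, Aₙ be distinct points of the Euclidean plane satisfying dist(A₁, Aₙ) = ∑_{i=1}^{n−1} dist(A_i, A_{i+1}) (so that the points lie in order on a line). Let B₁, …, Bₙ be any points of the plane with dist(B_i, B_{i+1}) = dist(A_i, A_{i+1}) for 1 ≤ i ≤ n − 1 and dist(B₁, Bₙ) = dist(A₁, Aₙ). Then the two configurations are congruent: there is an isometric equivalence φ : ℝ² ≃ᵢ ℝ² with φ(A_i) = B_i for all i. (Thus n distance measurements determine this degenerate n-point configuration up to isometry.) -/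
/-!
Since `|B₁Bₙ| = |A₁Aₙ|` equals the sum of the `n - 1` measured distances, the triangle
inequality along the path `B₁, …, Bₙ` is tight, so every `Bᵢ` lies on the segment `[B₁, Bₙ]`
at distance `|A₁Aᵢ|` from `B₁`. An isometry of the plane sending `A₁ ↦ B₁` and `Aₙ ↦ Bₙ`
sends `Aᵢ` to a point with the same two properties, and there is only one such point.
-/

noncomputable section

open Finset

theorem dist_eq_Ico_sum_dist_of_dist_eq_Ico_sum_dist {α : Type*} [PseudoMetricSpace α]
    (f : ℕ → α) {m i n : ℕ} (hmi : m ≤ i) (hin : i ≤ n)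
    (h : dist (f m) (f n) = ∑ j ∈ Ico m n, dist (f j) (f (j + 1))) :
    dist (f m) (f i) = ∑ j ∈ Ico m i, dist (f j) (f (j + 1)) ∧
      dist (f m) (f i) + dist (f i) (f n) = dist (f m) (f n) := by
  have hmi' := dist_le_Ico_sum_dist f hmi
  have hin' := dist_le_Ico_sum_dist f hin
  have hsplit := sum_Ico_consecutive (fun j ↦ dist (f j) (f (j + 1))) hmi hin
  have htri := dist_triangle (f m) (f i) (f n)
  constructor <;> linarith

theorem Wbtw.eq_of_dist_left_eq {V P : Type*} [NormedAddCommGroup V] [NormedSpace ℝ V]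
    [MetricSpace P] [NormedAddTorsor V P] {x y y' z : P} (h : Wbtw ℝ x y z)
    (h' : Wbtw ℝ x y' z) (hd : dist x y = dist x y') : y = y' := by
  obtain ⟨t, ht, rfl⟩ := h
  obtain ⟨s, hs, rfl⟩ := h'
  rcases eq_or_ne x z with rfl | hxz
  · simp
  rw [dist_left_lineMap, dist_left_lineMap, Real.norm_of_nonneg ht.1,
    Real.norm_of_nonneg hs.1] at hd
  rw [mul_right_cancel₀ (dist_ne_zero.2 hxz) hd]

theorem exists_isometryEquiv_apply_eq_of_dist_eq {E : Type*} [NormedAddCommGroup E]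
    [InnerProductSpace ℝ E] {a a' b b' : E} (h : dist a a' = dist b b') :
    ∃ φ : E ≃ᵢ E, φ a = b ∧ φ a' = b' := by
  have hnorm : ‖a' - a‖ = ‖b' - b‖ := by rwa [← dist_eq_norm', ← dist_eq_norm']
  let L := Submodule.reflection (ℝ ∙ ((a' - a) - (b' - b)))ᗮ
  refine ⟨((IsometryEquiv.constVAdd (-a)).trans L.toIsometryEquiv).trans
    (IsometryEquiv.constVAdd b), ?_, ?_⟩
  · show b + L (-a + a) = b
    simp
  · show b + L (-a + a') = b'
    rw [neg_add_eq_sub, Submodule.reflection_sub hnorm, add_sub_cancel]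

theorem collinear_points_distance_rigid_general (n : ℕ) (A : ℕ → Plane)
    (hline : dist (A 1) (A n) = ∑ i ∈ Finset.Ico 1 n, dist (A i) (A (i + 1)))
    (B : ℕ → Plane)
    (hB : ∀ i ∈ Finset.Ico 1 n, dist (B i) (B (i + 1)) = dist (A i) (A (i + 1)))
    (hBn : dist (B 1) (B n) = dist (A 1) (A n)) :
    ∃ φ : Plane ≃ᵢ Plane, ∀ i ∈ Finset.Icc 1 n, φ (A i) = B i := by
  have hBline : dist (B 1) (B n) = ∑ i ∈ Ico 1 n, dist (B i) (B (i + 1)) := by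
    rw [hBn, hline]
    exact (sum_congr rfl hB).symm
  obtain ⟨φ, hφ1, hφn⟩ := exists_isometryEquiv_apply_eq_of_dist_eq hBn.symm
  refine ⟨φ, fun i hi ↦ ?_⟩
  obtain ⟨h1i, hin⟩ := mem_Icc.1 hi
  obtain ⟨hA1i, hA1in⟩ := dist_eq_Ico_sum_dist_of_dist_eq_Ico_sum_dist A h1i hin hline
  obtain ⟨hB1i, hB1in⟩ := dist_eq_Ico_sum_dist_of_dist_eq_Ico_sum_dist B h1i hin hBline
  refine Wbtw.eq_of_dist_left_eq (x := B 1) (z := B n) ?_ (dist_add_dist_eq_iff.1 hB1in) ?_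
  · rw [← dist_add_dist_eq_iff, ← hφ1, ← hφn, φ.dist_eq, φ.dist_eq, φ.dist_eq]
    exact hA1in
  · rw [hB1i, ← hφ1, φ.dist_eq, hA1i]
    exact sum_congr rfl fun j hj ↦ (hB j (Ico_subset_Ico_right hin hj)).symm

/-- If the distinct points `A 1, …, A n` satisfy
`|A₁Aₙ| = |A₁A₂| + |A₂A₃| + ⋯ + |Aₙ₋₁Aₙ|` (so they lie in order on a line), then any
points `B 1, …, B n` with the same `n` measured distances `|BᵢBᵢ₊₁|` (`1 ≤ i ≤ n-1`)
and `|B₁Bₙ|` form a congruent configuration. -/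
theorem collinear_points_distance_rigid (n : ℕ) (hn : 2 ≤ n) (A : ℕ → Plane)
    (hdistinct : ∀ i ∈ Finset.Icc 1 n, ∀ j ∈ Finset.Icc 1 n, i ≠ j → A i ≠ A j)
    (hline : dist (A 1) (A n) = ∑ i ∈ Finset.Ico 1 n, dist (A i) (A (i + 1)))
    (B : ℕ → Plane)
    (hB : ∀ i ∈ Finset.Ico 1 n, dist (B i) (B (i + 1)) = dist (A i) (A (i + 1)))
    (hBn : dist (B 1) (B n) = dist (A 1) (A n)) :
    ∃ φ : Plane ≃ᵢ Plane, ∀ i ∈ Finset.Icc 1 n, φ (A i) = B i :=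
  collinear_points_distance_rigid_general n A hline B hB hBn
end
end

section
/- Let p, x, y, z be points of three-dimensional Euclidean space such that x lies in the coordinate plane {v : v 0 = 0}, y lies in {v : v 1 = 0}, and z lies in {v : v 2 = 0}. Then ‖p‖² ≤ dist(p, x)² + dist(p, y)² + dist(p, z)², with equality if and only if x, y, z are the orthogonal projections of p onto the three coordinate planes, i.e. x = (0, p 1, p 2), y = (p 0, 0, p 2), z = (p 0, p 1, 0) (equivalently, the segments px, py, pz are perpendicular to the respective planes). This is the inequality |A₁C₂|² ≤ |B₂C₂|² + |D₂C₂|² + |C₁C₂|², with equality only for perpendicular segments, used to show that ten distance measurements determine a cube. -/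
noncomputable section

theorem aux_real_ineq (p0 p1 p2 x1 x2 y0 y2 z0 z1 : ℝ) :
    p0 ^ 2 + p1 ^ 2 + p2 ^ 2 ≤
      ((p0 - 0)^2 + (p1 - x1)^2 + (p2 - x2)^2) + ((p0 - y0)^2 + (p1 - 0)^2 + (p2 - y2)^2)
      + ((p0 - z0)^2 + (p1 - z1)^2 + (p2 - 0)^2) ∧
    (p0 ^ 2 + p1 ^ 2 + p2 ^ 2 =
      ((p0 - 0)^2 + (p1 - x1)^2 + (p2 - x2)^2) + ((p0 - y0)^2 + (p1 - 0)^2 + (p2 - y2)^2)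
      + ((p0 - z0)^2 + (p1 - z1)^2 + (p2 - 0)^2) ↔
      (x1 = p1 ∧ x2 = p2) ∧ (y0 = p0 ∧ y2 = p2) ∧ (z0 = p0 ∧ z1 = p1)) := by
  have sq1 := sq_nonneg (p1 - x1); have sq2 := sq_nonneg (p2 - x2)
  have sq3 := sq_nonneg (p0 - y0); have sq4 := sq_nonneg (p2 - y2)
  have sq5 := sq_nonneg (p0 - z0); have sq6 := sq_nonneg (p1 - z1)
  constructor
  · nlinarith
  constructor
  · intro h
    have e : (p1 - x1)^2 + (p2 - x2)^2 + (p0 - y0)^2 + (p2 - y2)^2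
        + (p0 - z0)^2 + (p1 - z1)^2 = 0 := by linear_combination -h
    have k : ∀ a b : ℝ, (b - a)^2 = 0 → a = b := by
      intro a b hab
      have := pow_eq_zero_iff (n := 2) (by norm_num) |>.mp hab
      linarith
    exact ⟨⟨k _ _ (by linarith), k _ _ (by linarith)⟩,
      ⟨k _ _ (by linarith), k _ _ (by linarith)⟩,
      k _ _ (by linarith), k _ _ (by linarith)⟩
  · rintro ⟨⟨h1, h2⟩, ⟨h3, h4⟩, h5, h6⟩
    rw [h1, h2, h3, h4, h5, h6]; ring

/-- If `x`, `y`, `z` lie in the three coordinate planes of `ℝ³`, then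
`‖p‖² ≤ dist(p,x)² + dist(p,y)² + dist(p,z)²`, with equality exactly when `x`, `y`, `z`
are the orthogonal projections of `p` onto the three coordinate planes. -/
theorem norm_sq_le_sum_dist_sq_coordinate_planes (p x y z : Space)
    (hx : x 0 = 0) (hy : y 1 = 0) (hz : z 2 = 0) :
    ‖p‖ ^ 2 ≤ dist p x ^ 2 + dist p y ^ 2 + dist p z ^ 2 ∧
    (‖p‖ ^ 2 = dist p x ^ 2 + dist p y ^ 2 + dist p z ^ 2 ↔
      (x 1 = p 1 ∧ x 2 = p 2) ∧ (y 0 = p 0 ∧ y 2 = p 2) ∧ (z 0 = p 0 ∧ z 1 = p 1)) := by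
  have hn : ‖p‖ ^ 2 = p 0 ^ 2 + p 1 ^ 2 + p 2 ^ 2 := by
    rw [EuclideanSpace.norm_eq, Real.sq_sqrt (by positivity)]
    simp [Fin.sum_univ_three, sq_abs, sq]
  have hdx : dist p x ^ 2 = (p 0 - x 0)^2 + (p 1 - x 1)^2 + (p 2 - x 2)^2 := by
    rw [EuclideanSpace.dist_eq, Real.sq_sqrt (by positivity)]
    simp [Fin.sum_univ_three, Real.dist_eq, sq_abs, sq]
  have hdy : dist p y ^ 2 = (p 0 - y 0)^2 + (p 1 - y 1)^2 + (p 2 - y 2)^2 := by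
    rw [EuclideanSpace.dist_eq, Real.sq_sqrt (by positivity)]
    simp [Fin.sum_univ_three, Real.dist_eq, sq_abs, sq]
  have hdz : dist p z ^ 2 = (p 0 - z 0)^2 + (p 1 - z 1)^2 + (p 2 - z 2)^2 := by
    rw [EuclideanSpace.dist_eq, Real.sq_sqrt (by positivity)]
    simp [Fin.sum_univ_three, Real.dist_eq, sq_abs, sq]
  rw [hn, hdx, hdy, hdz, hx, hy, hz]
  exact aux_real_ineq (p 0) (p 1) (p 2) (x 1) (x 2) (y 0) (y 2) (z 0) (z 1)
end
end
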